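/- arXiv:2001.07818 — 7 statements merged into one kernel-verified Lean document; each statement's English description precedes it below -/
import Mathlib

section
/- Let K be a field of characteristic different from 2, and let a, t ∈ K with t ≠ 0. The Weierstrass curve E_{a,t} : y² = x³ + 2((a+1)/t² + a)·x² + x over K has discriminant Δ = 64·(a+1)·(t²+1)·((a−1)t² + (a+1)) / t⁴. Consequently, E_{a,t} is smooth (i.e. Δ ≠ 0, so it defines an elliptic curve) if and only if (a+1)·(t²+1)·((a−1)t²+(a+1)) ≠ 0. -/
/-- The fiber `E_{a,t}` of the van Geemen–Top elliptic surface, given by the Weierstrass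
equation `Y² = X(X² + 2((a+1)/t² + a)X + 1)`. -/
def vanGeemenTopFiber {K : Type*} [Field K] (a t : K) : WeierstrassCurve K :=
  { a₁ := 0, a₂ := 2 * ((a + 1) / t ^ 2 + a), a₃ := 0, a₄ := 1, a₆ := 0 }

/-- The discriminant of the fiber `E_{a,t}` is
`64 (a+1)(t²+1)((a−1)t²+(a+1)) / t⁴`; hence `E_{a,t}` is smooth if and only if
`(a+1)(t²+1)((a−1)t²+(a+1)) ≠ 0`. -/
theorem vanGeemenTopFiber_Δ {K : Type*} [Field K] (h2 : (2 : K) ≠ 0) (a t : K) (ht : t ≠ 0) :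
    (vanGeemenTopFiber a t).Δ =
      64 * (a + 1) * (t ^ 2 + 1) * ((a - 1) * t ^ 2 + (a + 1)) / t ^ 4 ∧
    ((vanGeemenTopFiber a t).Δ ≠ 0 ↔
      (a + 1) * (t ^ 2 + 1) * ((a - 1) * t ^ 2 + (a + 1)) ≠ 0) := by
  have hΔ : (vanGeemenTopFiber a t).Δ =
      64 * (a + 1) * (t ^ 2 + 1) * ((a - 1) * t ^ 2 + (a + 1)) / t ^ 4 := by
    simp only [vanGeemenTopFiber, WeierstrassCurve.Δ, WeierstrassCurve.b₂,
      WeierstrassCurve.b₄, WeierstrassCurve.b₆, WeierstrassCurve.b₈]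
    field_simp
    ring
  refine ⟨hΔ, ?_⟩
  rw [hΔ]
  have h64 : (64 : K) ≠ 0 := by
    have h : (64 : K) = 2 ^ 6 := by norm_num
    rw [h]; exact pow_ne_zero _ h2
  have ht4 : t ^ 4 ≠ 0 := pow_ne_zero _ ht
  rw [div_ne_zero_iff]
  constructor
  · rintro ⟨h, -⟩ hc
    apply h
    rw [show (64 : K) * (a + 1) * (t ^ 2 + 1) * ((a - 1) * t ^ 2 + (a + 1)) =
        64 * ((a + 1) * (t ^ 2 + 1) * ((a - 1) * t ^ 2 + (a + 1))) by ring, hc, mul_zero]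
  · intro h
    refine ⟨fun hc => h ?_, ht4⟩
    have : (64 : K) * ((a + 1) * (t ^ 2 + 1) * ((a - 1) * t ^ 2 + (a + 1))) = 0 := by
      rw [← hc]; ring
    rcases mul_eq_zero.1 this with h1 | h1
    · exact absurd h1 h64
    · exact h1
end

section
/- Let F be a finite field of odd characteristic and let a, t ∈ F with t ≠ 0 and (a+1)·(t²+1)·((a−1)t²+(a+1)) ≠ 0. If there exists b ∈ F with b² = 2(a+1)(t²+1), then the number of pairs (x,y) ∈ F × F satisfying y² = x³ + 2((a+1)/t² + a)·x² + x is congruent to 3 modulo 4. (Equivalently, 4 divides the total number of F-points of the elliptic curve E_{a,t}, including the point at infinity.) -/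
/-!
`E_{a,t}` is the Montgomery curve `y² = x³ + A x² + x` with `A = 2((a+1)/t² + a)`, and
`A + 2 = 2(a+1)(t²+1)/t²`. So the hypothesis says exactly that `A + 2 = y₁²` for some `y₁ ≠ 0`,
and then the point `(1, y₁)` doubles to the `2`-torsion point `(0, 0)`, so it has order `4`.
Hence `4` divides `#E(F)`, which is one more than the affine count because `E` is smooth.
-/

open WeierstrassCurve WeierstrassCurve.Affine

namespace WeierstrassCurve

def montgomery {R : Type*} [CommRing R] (A : R) : WeierstrassCurve R :=
  { a₁ := 0, a₂ := A, a₃ := 0, a₄ := 1, a₆ := 0 }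

section CommRing

variable {R : Type*} [CommRing R] (A : R)

lemma montgomery_Δ : (montgomery A).Δ = 16 * (A ^ 2 - 4) := by
  simp only [montgomery, Δ, b₂, b₄, b₆, b₈]
  ring

lemma montgomery_equation_iff (x y : R) :
    (montgomery A).toAffine.Equation x y ↔ y ^ 2 = x ^ 3 + A * x ^ 2 + x := by
  rw [equation_iff]
  simp only [montgomery]
  ring_nf

lemma montgomery_nonsingular_zero [Nontrivial R] : (montgomery A).toAffine.Nonsingular 0 0 :=
  nonsingular_zero.mpr ⟨rfl, Or.inr one_ne_zero⟩

variable {A} in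
lemma montgomery_nonsingular_one {y : R} (hy : y ^ 2 = A + 2) (h2y : 2 * y ≠ 0) :
    (montgomery A).toAffine.Nonsingular 1 y := by
  refine (nonsingular_iff' _ _).mpr ⟨(montgomery_equation_iff A 1 y).mpr ?_, Or.inr ?_⟩
  · rw [hy]; ring
  · simpa [montgomery] using h2y

end CommRing

section Field

variable {F : Type*} [Field F] {A y : F}

section DecidableEq

variable [DecidableEq F]

lemma montgomery_some_zero_add_self :
    Point.some 0 0 (montgomery_nonsingular_zero A) +
      Point.some 0 0 (montgomery_nonsingular_zero A) = 0 :=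
  Point.add_self_of_Y_eq (by simp [negY, montgomery])

/-- The tangent at `(1, y)` has slope `(3 + 2A + 1) / 2y = y`. -/
lemma montgomery_some_one_add_self (hy : y ^ 2 = A + 2) (h2y : 2 * y ≠ 0) :
    Point.some 1 y (montgomery_nonsingular_one hy h2y) +
        Point.some 1 y (montgomery_nonsingular_one hy h2y) =
      Point.some 0 0 (montgomery_nonsingular_zero A) := by
  have hy' : y ≠ (montgomery A).toAffine.negY 1 y := by
    simp only [negY, montgomery]
    contrapose! h2y
    linear_combination h2y
  have hslope : (montgomery A).toAffine.slope 1 1 y y = y := by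
    rw [slope_of_Y_ne rfl hy', div_eq_iff (by simpa [negY, montgomery, two_mul] using h2y)]
    simp only [negY, montgomery]
    linear_combination (-2) * hy
  rw [Point.add_self_of_Y_ne hy']
  congr 1
  · rw [addX, hslope]; simp only [montgomery]; linear_combination hy
  · rw [addY, negAddY, addX, hslope]; simp only [negY, montgomery]; linear_combination (-y) * hy

lemma montgomery_addOrderOf_some_one (hy : y ^ 2 = A + 2) (h2y : 2 * y ≠ 0) :
    addOrderOf (Point.some 1 y (montgomery_nonsingular_one hy h2y)) = 4 := by
  refine addOrderOf_eq_prime_pow (p := 2) (n := 1) ?_ ?_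
  · rw [pow_one, two_nsmul, montgomery_some_one_add_self hy h2y]
    exact Point.some_ne_zero _
  · rw [pow_two, mul_nsmul, two_nsmul, two_nsmul, montgomery_some_one_add_self hy h2y,
      montgomery_some_zero_add_self]

end DecidableEq

lemma four_dvd_natCard_montgomery_point (hy : y ^ 2 = A + 2) (h2y : 2 * y ≠ 0) :
    4 ∣ Nat.card (montgomery A).toAffine.Point := by
  classical
  exact montgomery_addOrderOf_some_one hy h2y ▸ addOrderOf_dvd_natCard _

lemma Affine.natCard_point_eq_natCard_equation_add_one [Finite F] {W : Affine F} (hΔ : W.Δ ≠ 0) :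
    Nat.card W.Point = Nat.card {p : F × F // W.Equation p.1 p.2} + 1 := by
  rw [Nat.card_congr W.nonsingularPointEquiv, WithZero, Finite.card_option]
  congr 1
  exact Nat.card_congr <| Equiv.subtypeEquivRight fun p =>
    (equation_iff_nonsingular_of_Δ_ne_zero hΔ).symm

lemma natCard_montgomery_point [Finite F] (hΔ : (montgomery A).Δ ≠ 0) :
    Nat.card (montgomery A).toAffine.Point =
      Nat.card {p : F × F // p.2 ^ 2 = p.1 ^ 3 + A * p.1 ^ 2 + p.1} + 1 := by
  rw [Affine.natCard_point_eq_natCard_equation_add_one hΔ]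
  simp_rw [montgomery_equation_iff]

end Field

end WeierstrassCurve

/-- Over a finite field `F` of odd characteristic, for a smooth fiber `E_{a,t}` of the
van Geemen–Top elliptic surface, if `2(a+1)(t²+1)` is a square in `F`, then the number of
affine points `(x, y) ∈ F × F` with `y² = x³ + 2((a+1)/t² + a)x² + x` is congruent to `3`
modulo `4` (equivalently, `4` divides the total number of `F`-points, including the point
at infinity). -/
theorem vanGeemenTop_affine_point_count_mod_four {F : Type*} [Field F] [Fintype F]
    (hchar : ringChar F ≠ 2) (a t : F) (ht : t ≠ 0)
    (hΔ : (a + 1) * (t ^ 2 + 1) * ((a - 1) * t ^ 2 + (a + 1)) ≠ 0)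
    (hsq : ∃ b : F, b ^ 2 = 2 * (a + 1) * (t ^ 2 + 1)) :
    Nat.card {p : F × F //
      p.2 ^ 2 = p.1 ^ 3 + 2 * ((a + 1) / t ^ 2 + a) * p.1 ^ 2 + p.1} % 4 = 3 := by
  have h2 : (2 : F) ≠ 0 := Ring.two_ne_zero hchar
  obtain ⟨b, hb⟩ := hsq
  have hb0 : b ≠ 0 := by
    refine (pow_ne_zero_iff two_ne_zero).mp ?_
    rw [hb, mul_assoc]
    exact mul_ne_zero h2 (left_ne_zero_of_mul hΔ)
  have hy : (b / t) ^ 2 = 2 * ((a + 1) / t ^ 2 + a) + 2 := by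
    rw [div_pow, hb]
    field_simp
    ring
  have hΔE : (montgomery (2 * ((a + 1) / t ^ 2 + a))).Δ ≠ 0 := by
    have hΔ_eq : (montgomery (2 * ((a + 1) / t ^ 2 + a))).Δ =
        2 ^ 6 * ((a + 1) * (t ^ 2 + 1) * ((a - 1) * t ^ 2 + (a + 1))) / t ^ 4 := by
      rw [montgomery_Δ]
      field_simp
      ring
    rw [hΔ_eq]
    exact div_ne_zero (mul_ne_zero (pow_ne_zero 6 h2) hΔ) (pow_ne_zero 4 ht)
  have h4 := four_dvd_natCard_montgomery_point hy (mul_ne_zero h2 (div_ne_zero hb0 ht))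
  rw [natCard_montgomery_point hΔE] at h4
  omega
end

section
/- Let K be a field of characteristic different from 2, let a, t ∈ K with t ≠ 0 and (a+1)·(t²+1)·((a−1)t²+(a+1)) ≠ 0, and let b ∈ K with b² = 2(a+1)(t²+1). Then (1, b/t) is an affine point of the elliptic curve E_{a,t} : y² = x³ + 2((a+1)/t² + a)·x² + x, and in the group of K-points of E_{a,t} (with identity the point at infinity) one has (1, b/t) + (1, b/t) = (0, 0); in particular the point (1, b/t) has order 4. -/
/-!
`E_{a,t}` is the curve `y² = x³ + A x² + x` with `A = 2((a+1)/t² + a)`, and `b² = 2(a+1)(t²+1)`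
says precisely that `(b/t)² = A + 2`, i.e. that `(1, b/t)` lies on it. At a point `(1, y)` of
such a curve the tangent has slope `(3 + 2A + 1)/(2y) = (A + 2)/y = y`, so it passes through
the origin; as `(0, 0)` is its own negative, `2 • (1, y) = (0, 0)`, a point of order `2`.
-/

namespace WeierstrassCurve.Affine

variable {K : Type*} [Field K]

/-- The Montgomery curve `B y² = x³ + A x² + x` with `B = 1`. -/
abbrev montgomery (A : K) : WeierstrassCurve.Affine K :=
  { a₁ := 0, a₂ := A, a₃ := 0, a₄ := 1, a₆ := 0 }

lemma montgomery_nonsingular_zero (A : K) : (montgomery A).Nonsingular 0 0 := by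
  simp [nonsingular_iff', equation_iff]

lemma montgomery_nonsingular_one {A y : K} (hy : y ^ 2 = A + 2) (h2y : 2 * y ≠ 0) :
    (montgomery A).Nonsingular 1 y := by
  rw [nonsingular_iff', equation_iff]
  refine ⟨by linear_combination hy, Or.inr ?_⟩
  simpa using h2y

variable [DecidableEq K]

lemma montgomery_some_zero_add_self (A : K) :
    Point.some _ _ (montgomery_nonsingular_zero A) + Point.some _ _ (montgomery_nonsingular_zero A)
      = 0 :=
  Point.add_self_of_Y_eq (by simp)

lemma montgomery_some_one_add_self {A y : K} (hy : y ^ 2 = A + 2) (h2y : 2 * y ≠ 0) :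
    Point.some _ _ (montgomery_nonsingular_one hy h2y) +
        Point.some _ _ (montgomery_nonsingular_one hy h2y) =
      Point.some _ _ (montgomery_nonsingular_zero A) := by
  have hyne : y ≠ (montgomery A).negY 1 y := by
    simp only [negY]
    intro h
    exact h2y (by linear_combination h)
  have hslope : (montgomery A).slope 1 1 y y = y := by
    rw [slope_of_Y_ne rfl hyne, div_eq_iff (by simpa [negY, two_mul, sub_neg_eq_add] using h2y)]
    simp only [negY]
    linear_combination (-2) * hy
  rw [Point.add_self_of_Y_ne hyne]
  congr 1
  · rw [addX, hslope]; linear_combination hy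
  · rw [addY, negAddY, addX, hslope]; simp only [negY]; linear_combination (-y) * hy

end WeierstrassCurve.Affine

open WeierstrassCurve.Affine

lemma addOrderOf_eq_four_of_two_nsmul {G : Type*} [AddMonoid G] {P Q : G} (hPQ : 2 • P = Q)
    (hQ : Q ≠ 0) (hQQ : 2 • Q = 0) : addOrderOf P = 4 :=
  addOrderOf_eq_prime_pow (p := 2) (n := 1) (by simpa [hPQ] using hQ)
    (by rw [pow_succ, pow_one, mul_nsmul, hPQ, hQQ])

open Classical in
/-- Over a field `K` of characteristic different from 2, on a smooth fiber
`E_{a,t} : y² = x³ + 2((a+1)/t² + a)x² + x` of the van Geemen–Top elliptic surface, if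
`b² = 2(a+1)(t²+1)`, then `(1, b/t)` is an affine point, doubling it gives `(0, 0)`, and
it has order `4` in the group of `K`-points. -/
theorem vanGeemenTop_four_torsion {K : Type*} [Field K] (h2 : (2 : K) ≠ 0) (a t b : K)
    (ht : t ≠ 0) (hΔ : (a + 1) * (t ^ 2 + 1) * ((a - 1) * t ^ 2 + (a + 1)) ≠ 0)
    (hb : b ^ 2 = 2 * (a + 1) * (t ^ 2 + 1)) :
    ∃ (W : WeierstrassCurve.Affine K)
      (_ : W = { a₁ := 0, a₂ := 2 * ((a + 1) / t ^ 2 + a), a₃ := 0, a₄ := 1, a₆ := 0 })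
      (h₁ : W.Nonsingular 1 (b / t)) (h₀ : W.Nonsingular 0 0),
      WeierstrassCurve.Affine.Point.some _ _ h₁ + WeierstrassCurve.Affine.Point.some _ _ h₁ =
        WeierstrassCurve.Affine.Point.some _ _ h₀ ∧
      addOrderOf (WeierstrassCurve.Affine.Point.some _ _ h₁) = 4 := by
  have hy : (b / t) ^ 2 = 2 * ((a + 1) / t ^ 2 + a) + 2 := by
    field_simp
    linear_combination hb
  have hb0 : b ≠ 0 := by
    have hb2 : b ^ 2 ≠ 0 := by
      rw [hb, mul_assoc]
      exact mul_ne_zero h2 (left_ne_zero_of_mul hΔ)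
    exact fun h => hb2 (by simp [h])
  have h2y : 2 * (b / t) ≠ 0 := mul_ne_zero h2 (div_ne_zero hb0 ht)
  have hdouble := montgomery_some_one_add_self hy h2y
  refine ⟨_, rfl, montgomery_nonsingular_one hy h2y, montgomery_nonsingular_zero _, hdouble, ?_⟩
  exact addOrderOf_eq_four_of_two_nsmul (by rw [two_nsmul, hdouble]) (Point.some_ne_zero _)
    (by rw [two_nsmul, montgomery_some_zero_add_self])
end

section
/- Let F be a finite field of odd characteristic and let a ∈ F be such that a² − 1 is a nonzero square in F. Then the number of pairs (x,y) ∈ F × F satisfying y² = x³ + 2a·x² + x is congruent to 3 modulo 4. (Equivalently, 4 divides the total number of F-points of the elliptic curve E_∞, including the point at infinity: the cubic x(x² + 2ax + 1) splits completely over F, so E_∞ has full rational 2-torsion.) -/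
open Finset

private lemma even_card_of_fixedfree_involution {α : Type*} [DecidableEq α]
    (g : α → α) (s : Finset α) (hmap : ∀ x ∈ s, g x ∈ s)
    (hinv : ∀ x ∈ s, g (g x) = x) (hne : ∀ x ∈ s, g x ≠ x) : Even s.card := by
  induction s using Finset.strongInductionOn with
  | _ s ih =>
    rcases s.eq_empty_or_nonempty with rfl | ⟨x, hx⟩
    · simp
    · have hgx := hmap x hx
      have hxne := hne x hx
      have hpair : ({x, g x} : Finset α) ⊆ s := by
        intro y hy
        simp only [Finset.mem_insert, Finset.mem_singleton] at hy
        rcases hy with rfl | rfl <;> assumption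
      have hcardpair : ({x, g x} : Finset α).card = 2 := by
        rw [Finset.card_insert_of_notMem (by simpa using hxne.symm)]
        simp
      have hts : s \ {x, g x} ⊂ s :=
        Finset.sdiff_ssubset hpair ⟨x, by simp⟩
      have hmap' : ∀ y ∈ s \ {x, g x}, g y ∈ s \ {x, g x} := by
        intro y hy
        simp only [Finset.mem_sdiff, Finset.mem_insert, Finset.mem_singleton,
          not_or] at hy ⊢
        obtain ⟨hys, hy1, hy2⟩ := hy
        refine ⟨hmap y hys, ?_, ?_⟩
        · intro h; exact hy2 (by rw [← hinv y hys, h])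
        · intro h
          apply hy1
          have := congrArg g h
          rwa [hinv y hys, hinv x hx] at this
      have heven := ih _ hts (fun y hy => hmap' y hy)
        (fun y hy => hinv y (Finset.mem_sdiff.mp hy).1)
        (fun y hy => hne y (Finset.mem_sdiff.mp hy).1)
      have hcard : (s \ {x, g x}).card = s.card - 2 := by
        rw [Finset.card_sdiff_of_subset hpair, hcardpair]
      have hle : 2 ≤ s.card := hcardpair ▸ Finset.card_le_card hpair
      obtain ⟨r, hr⟩ := heven
      exact ⟨r + 1, by omega⟩

private lemma isSquare_iff_of_mul_eq_sq {F : Type*} [Field F] {u v w : F}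
    (hu : u ≠ 0) (hv : v ≠ 0) (h : u * v = w ^ 2) : IsSquare u ↔ IsSquare v := by
  have key : ∀ p q : F, p ≠ 0 → q ≠ 0 → p * q = w ^ 2 → IsSquare p → IsSquare q := by
    intro p q hp hq hpq ⟨t, ht⟩
    have htne : t ≠ 0 := by rintro rfl; simp at ht; exact hp ht
    refine ⟨w / t, ?_⟩
    field_simp
    linear_combination hpq - q * ht
  exact ⟨key u v hu hv h, key v u hv hu (by rw [mul_comm]; exact h)⟩

/-- Over a finite field `F` of odd characteristic, if `a² − 1` is a nonzero square in `F`,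
then the number of affine points `(x, y) ∈ F × F` with `y² = x³ + 2ax² + x` is congruent
to `3` modulo `4` (equivalently, `4` divides the total number of `F`-points of `E_∞`,
including the point at infinity, since `E_∞` has full rational 2-torsion). -/
theorem vanGeemenTop_infinity_count_mod_four_of_two_torsion {F : Type*} [Field F] [Fintype F]
    (hchar : ringChar F ≠ 2) (a : F)
    (hsq : ∃ c : F, c ≠ 0 ∧ c ^ 2 = a ^ 2 - 1) :
    Nat.card {p : F × F // p.2 ^ 2 = p.1 ^ 3 + 2 * a * p.1 ^ 2 + p.1} % 4 = 3 := by
  classical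
  obtain ⟨c, hc0, hc⟩ := hsq
  have htwo : (2 : F) ≠ 0 := Ring.two_ne_zero hchar
  set f : F → F := fun x => x ^ 3 + 2 * a * x ^ 2 + x with hf
  -- the count as a sum over x of fiber counts
  have hcount : Nat.card {p : F × F // p.2 ^ 2 = p.1 ^ 3 + 2 * a * p.1 ^ 2 + p.1}
      = ∑ x : F, (univ.filter fun y : F => y ^ 2 = f x).card := by
    rw [Nat.card_eq_fintype_card, Fintype.card_subtype]
    rw [Finset.card_filter]
    rw [Fintype.sum_prod_type]
    congr 1
    ext x
    rw [Finset.card_filter]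
  -- fiber count formula
  have hfiber : ∀ x : F, (univ.filter fun y : F => y ^ 2 = f x).card
      = if f x = 0 then 1 else if IsSquare (f x) then 2 else 0 := by
    intro x
    by_cases h0 : f x = 0
    · rw [if_pos h0]
      have : (univ.filter fun y : F => y ^ 2 = f x) = {0} := by
        ext y; simp [h0, pow_eq_zero_iff]
      rw [this, Finset.card_singleton]
    · rw [if_neg h0]
      by_cases hs : IsSquare (f x)
      · rw [if_pos hs]
        obtain ⟨t, ht⟩ := hs
        have htne : t ≠ 0 := by rintro rfl; simp at ht; exact h0 ht
        have : (univ.filter fun y : F => y ^ 2 = f x) = {t, -t} := by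
          ext y
          simp only [Finset.mem_filter, Finset.mem_univ, true_and, Finset.mem_insert,
            Finset.mem_singleton]
          constructor
          · intro hy
            have hz : (y - t) * (y + t) = 0 := by
              have : y ^ 2 = t * t := by rw [hy, ht]
              linear_combination this
            rcases mul_eq_zero.mp hz with h | h
            · exact Or.inl (sub_eq_zero.mp h)
            · exact Or.inr (eq_neg_of_add_eq_zero_left h)
          · rintro (rfl | rfl) <;> rw [ht] <;> ring
        rw [this, Finset.card_insert_of_notMem (by
          simp only [Finset.mem_singleton]
          intro h
          have h2 : 2 * t = 0 := by linear_combination h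
          exact htne ((mul_eq_zero.mp h2).resolve_left htwo))]
        simp
      · rw [if_neg hs]
        rw [Finset.card_eq_zero]
        ext y
        simp only [Finset.mem_filter, Finset.mem_univ, true_and, Finset.notMem_empty,
          iff_false]
        intro hy
        exact hs ⟨y, by rw [← hy]; ring⟩
  -- split the sum
  have hsum : ∑ x : F, (univ.filter fun y : F => y ^ 2 = f x).card
      = (univ.filter fun x : F => f x = 0).card
        + 2 * (univ.filter fun x : F => f x ≠ 0 ∧ IsSquare (f x)).card := by
    have hsplit : ∀ x : F,
        (if f x = 0 then 1 else if IsSquare (f x) then 2 else 0)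
        = (if f x = 0 then 1 else 0) + (if f x ≠ 0 ∧ IsSquare (f x) then 2 else 0) := by
      intro x; by_cases h0 : f x = 0 <;> by_cases hs : IsSquare (f x) <;> simp [h0, hs]
    calc ∑ x : F, (univ.filter fun y : F => y ^ 2 = f x).card
        = ∑ x : F, ((if f x = 0 then 1 else 0)
            + (if f x ≠ 0 ∧ IsSquare (f x) then 2 else 0)) := by
          simp only [hfiber, hsplit]
      _ = (∑ x : F, if f x = 0 then 1 else 0)
            + ∑ x : F, (if f x ≠ 0 ∧ IsSquare (f x) then 2 else 0) := by
          rw [Finset.sum_add_distrib]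
      _ = (univ.filter fun x : F => f x = 0).card
            + 2 * (univ.filter fun x : F => f x ≠ 0 ∧ IsSquare (f x)).card := by
          rw [Finset.card_filter, Finset.card_filter, Finset.mul_sum]
          congr 1
          refine Finset.sum_congr rfl fun x _ => ?_
          by_cases h : f x ≠ 0 ∧ IsSquare (f x) <;> simp [h]
  -- the cubic has exactly three roots
  have h1c : -a + c ≠ 0 := by
    intro h
    have : (1 : F) = 0 := by linear_combination hc - (a + c) * h
    exact one_ne_zero this
  have h2c : -a - c ≠ 0 := by
    intro h
    have : (1 : F) = 0 := by linear_combination hc - (a - c) * h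
    exact one_ne_zero this
  have h12 : -a + c ≠ -a - c := by
    intro h
    have h2 : 2 * c = 0 := by linear_combination h
    exact hc0 ((mul_eq_zero.mp h2).resolve_left htwo)
  have hroots : (univ.filter fun x : F => f x = 0).card = 3 := by
    have hroot_iff : ∀ x : F, f x = 0 ↔ x = 0 ∨ x = -a + c ∨ x = -a - c := by
      intro x
      simp only [hf]
      constructor
      · intro h
        have hz : x * ((x - (-a + c)) * (x - (-a - c))) = 0 := by
          linear_combination h - x * hc
        rcases mul_eq_zero.mp hz with h1 | h2
        · exact Or.inl h1
        · rcases mul_eq_zero.mp h2 with h' | h'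
          · exact Or.inr (Or.inl (sub_eq_zero.mp h'))
          · exact Or.inr (Or.inr (sub_eq_zero.mp h'))
      · rintro (rfl | rfl | rfl)
        · ring
        · linear_combination (-a + c) * hc
        · linear_combination (-a - c) * hc
    have hset : (univ.filter fun x : F => f x = 0) = {0, -a + c, -a - c} := by
      ext x
      simp only [Finset.mem_filter, Finset.mem_univ, true_and, Finset.mem_insert,
        Finset.mem_singleton]
      exact hroot_iff x
    rw [hset]
    rw [Finset.card_insert_of_notMem (by simp [h1c.symm, h2c.symm]),
      Finset.card_insert_of_notMem (by simpa using h12), Finset.card_singleton]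
  -- the set of x with f x a nonzero square has even cardinality
  set S : Finset F := univ.filter fun x : F => f x ≠ 0 ∧ IsSquare (f x) with hS
  have hmemS : ∀ x : F, x ∈ S ↔ f x ≠ 0 ∧ IsSquare (f x) := by
    intro x; simp [hS]
  have hf0 : f 0 = 0 := by simp [hf]
  have hSne0 : ∀ x ∈ S, x ≠ 0 := by
    rintro x hx rfl
    exact ((hmemS 0).mp hx).1 hf0
  have hmapS : ∀ x ∈ S, x⁻¹ ∈ S := by
    intro x hx
    have hx0 := hSne0 x hx
    obtain ⟨hfx0, hfxsq⟩ := (hmemS x).mp hx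
    have hid : f x⁻¹ = f x * (x⁻¹ ^ 2) ^ 2 := by
      simp only [hf]
      field_simp
      ring
    rw [hmemS, hid]
    constructor
    · exact mul_ne_zero hfx0 (pow_ne_zero _ (pow_ne_zero _ (inv_ne_zero hx0)))
    · exact hfxsq.mul ⟨x⁻¹ ^ 2, by ring⟩
  -- f 1 and f (-1) : both nonzero, and simultaneously square or not
  have hfone : f 1 = 2 + 2 * a := by simp only [hf]; ring
  have hfnegone : f (-1) = 2 * a - 2 := by simp only [hf]; ring
  have hfone0 : f 1 ≠ 0 := by
    rw [hfone]
    intro h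
    have h2 : 2 * c ^ 2 = 0 := by linear_combination 2 * hc + (a - 1) * h
    have : c ^ 2 = 0 := (mul_eq_zero.mp h2).resolve_left htwo
    exact hc0 (by simpa using pow_eq_zero_iff (n := 2) (by norm_num) |>.mp this)
  have hfnegone0 : f (-1) ≠ 0 := by
    rw [hfnegone]
    intro h
    have h2 : 2 * c ^ 2 = 0 := by linear_combination 2 * hc + (a + 1) * h
    have : c ^ 2 = 0 := (mul_eq_zero.mp h2).resolve_left htwo
    exact hc0 (by simpa using pow_eq_zero_iff (n := 2) (by norm_num) |>.mp this)
  have hsq_iff : IsSquare (f 1) ↔ IsSquare (f (-1)) := by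
    refine isSquare_iff_of_mul_eq_sq hfone0 hfnegone0 (w := 2 * c) ?_
    rw [hfone, hfnegone]
    linear_combination -4 * hc
  have hone_iff : (1 : F) ∈ S ↔ (-1 : F) ∈ S := by
    rw [hmemS, hmemS]
    simp only [hfone0, hfnegone0, ne_eq, not_false_iff, true_and]
    exact hsq_iff
  have hone_ne_negone : (1 : F) ≠ -1 := by
    intro h
    have h2 : (2 : F) = 0 := by linear_combination h
    exact htwo h2
  -- split S into fixed and moved points of x ↦ x⁻¹
  have hfixsub : S.filter (fun x => x⁻¹ = x) ⊆ {1, -1} := by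
    intro x hx
    obtain ⟨hxS, hxfix⟩ := Finset.mem_filter.mp hx
    have hx0 := hSne0 x hxS
    have hxx : x * x = 1 := by
      nth_rewrite 1 [← hxfix]
      exact inv_mul_cancel₀ hx0
    have hz : (x - 1) * (x + 1) = 0 := by linear_combination hxx
    simp only [Finset.mem_insert, Finset.mem_singleton]
    rcases mul_eq_zero.mp hz with h | h
    · exact Or.inl (sub_eq_zero.mp h)
    · exact Or.inr (eq_neg_of_add_eq_zero_left h)
  have hfixcard : Even (S.filter (fun x => x⁻¹ = x)).card := by
    by_cases h1 : (1 : F) ∈ S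
    · have hn1 : (-1 : F) ∈ S := hone_iff.mp h1
      have : S.filter (fun x => x⁻¹ = x) = {1, -1} := by
        refine Finset.Subset.antisymm hfixsub ?_
        intro x hx
        simp only [Finset.mem_insert, Finset.mem_singleton] at hx
        rcases hx with rfl | rfl
        · exact Finset.mem_filter.mpr ⟨h1, by norm_num⟩
        · exact Finset.mem_filter.mpr ⟨hn1, by norm_num⟩
      rw [this, Finset.card_insert_of_notMem (by simpa using hone_ne_negone),
        Finset.card_singleton]
      exact ⟨1, rfl⟩
    · have hn1 : (-1 : F) ∉ S := fun h => h1 (hone_iff.mpr h)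
      have : S.filter (fun x => x⁻¹ = x) = ∅ := by
        refine Finset.eq_empty_of_forall_notMem fun x hx => ?_
        have := hfixsub hx
        simp only [Finset.mem_insert, Finset.mem_singleton] at this
        rcases this with rfl | rfl
        · exact h1 (Finset.mem_filter.mp hx).1
        · exact hn1 (Finset.mem_filter.mp hx).1
      simp [this]
  have hmovcard : Even (S.filter (fun x => ¬x⁻¹ = x)).card := by
    refine even_card_of_fixedfree_involution (fun x => x⁻¹) _ ?_ ?_ ?_
    · intro x hx
      obtain ⟨hxS, hxne⟩ := Finset.mem_filter.mp hx
      refine Finset.mem_filter.mpr ⟨hmapS x hxS, ?_⟩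
      simp only [inv_inv]
      exact fun h => hxne h.symm
    · intro x _; exact inv_inv x
    · intro x hx; exact (Finset.mem_filter.mp hx).2
  have hScard : Even S.card := by
    rw [← Finset.card_filter_add_card_filter_not (p := fun x => x⁻¹ = x)]
    exact hfixcard.add hmovcard
  obtain ⟨m, hm⟩ := hScard
  rw [hcount, hsum, hroots, hm]
  omega
end

section
/- Let F be a finite field of odd characteristic and let a ∈ F be such that a² − 1 is a nonzero square in F and 2(1+a) is a square in F. Then the number of pairs (x,y) ∈ F × F satisfying y² = x³ + 2a·x² + x is congruent to 7 modulo 8. (Equivalently, 8 divides the total number of F-points of the elliptic curve E_∞, including the point at infinity, since its group of F-points contains a subgroup isomorphic to ℤ/4 × ℤ/2.) -/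
/-!
If `c² = a² - 1` with `c ≠ 0` and `s² = 2(1 + a)`, the points `T = (0, 0)`, `(c - a, 0)` and
`P = (1, s)` lie on `E_∞`. The first two are distinct points of order 2, and the tangent at `P`
meets the curve again at `T`, so `2P = T` and `P` has order 4. Since `(c - a, 0)` is neither `0`
nor `T`, it lies outside `⟨P⟩ ≅ ℤ/4`, so `8 ∣ #E_∞(F) = N + 1`.
-/

open WeierstrassCurve WeierstrassCurve.Affine

section AddGroup

variable {G : Type*} [AddGroup G] {P Q : G}

theorem notMem_zmultiples_of_addOrderOf_eq_four (hP : addOrderOf P = 4) (hQ : 2 • Q = 0)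
    (hQ₀ : Q ≠ 0) (hQP : Q ≠ 2 • P) : Q ∉ AddSubgroup.zmultiples P := by
  classical
  have hfin : IsOfFinAddOrder P := addOrderOf_pos_iff.mp (by omega)
  rw [hfin.mem_zmultiples_iff_mem_range_addOrderOf, hP]
  simp only [Finset.mem_image, Finset.mem_range]
  rintro ⟨n, hn, rfl⟩
  have h2P : 2 • P ≠ 0 := nsmul_ne_zero_of_lt_addOrderOf (by norm_num) (by omega)
  interval_cases n
  · exact hQ₀ (zero_nsmul P)
  · exact h2P (by simpa using hQ)
  · exact hQP rfl
  · apply h2P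
    rw [← hQ, ← mul_nsmul', show 2 * 3 = 4 + 2 by rfl, add_nsmul, ← hP,
      addOrderOf_nsmul_eq_zero, zero_add]

end AddGroup

theorem eight_dvd_natCard_of_addOrderOf_eq_four {G : Type*} [AddCommGroup G] [Finite G]
    {P Q : G} (hP : addOrderOf P = 4) (hQ : 2 • Q = 0) (hQP : Q ∉ AddSubgroup.zmultiples P) :
    8 ∣ Nat.card G := by
  have hQ' : addOrderOf (Q : G ⧸ AddSubgroup.zmultiples P) = 2 :=
    addOrderOf_eq_prime (by rw [← QuotientAddGroup.mk_nsmul, hQ, QuotientAddGroup.mk_zero])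
      (mt (QuotientAddGroup.eq_zero_iff Q).mp hQP)
  rw [AddSubgroup.card_eq_card_quotient_mul_card_addSubgroup, Nat.card_zmultiples, hP]
  exact Nat.mul_dvd_mul_right (hQ' ▸ addOrderOf_dvd_natCard _) 4

theorem WeierstrassCurve.Affine.natCard_point {F : Type*} [Field F] [Finite F]
    (W : WeierstrassCurve.Affine F) [W.IsElliptic] :
    Nat.card W.Point = Nat.card {xy : F × F // W.Equation xy.1 xy.2} + 1 := by
  rw [Nat.card_congr W.pointEquiv]
  exact Finite.card_option

namespace VanGeemenTop

def fiberAtInfinity {R : Type*} [CommRing R] (a : R) : WeierstrassCurve R :=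
  { a₁ := 0, a₂ := 2 * a, a₃ := 0, a₄ := 1, a₆ := 0 }

section CommRing

variable {R : Type*} [CommRing R] (a : R)

theorem fiberAtInfinity_Δ : (fiberAtInfinity a).Δ = 64 * (a ^ 2 - 1) := by
  simp only [fiberAtInfinity, Δ, b₂, b₄, b₆, b₈]
  ring

theorem fiberAtInfinity_equation_iff (x y : R) :
    (fiberAtInfinity a).toAffine.Equation x y ↔ y ^ 2 = x ^ 3 + 2 * a * x ^ 2 + x := by
  rw [equation_iff]
  simp only [fiberAtInfinity]
  ring_nf

theorem fiberAtInfinity_negY (x y : R) : (fiberAtInfinity a).toAffine.negY x y = -y := by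
  simp [fiberAtInfinity, negY]

end CommRing

section Field

variable {F : Type*} [Field F] {a : F}

theorem isElliptic_fiberAtInfinity (h2 : (2 : F) ≠ 0) (ha : a ^ 2 - 1 ≠ 0) :
    (fiberAtInfinity a).IsElliptic := by
  rw [isElliptic_iff, fiberAtInfinity_Δ, isUnit_iff_ne_zero, show (64 : F) = 2 ^ 6 by norm_num]
  exact mul_ne_zero (pow_ne_zero 6 h2) ha

theorem fiberAtInfinity_equation_zero_zero : (fiberAtInfinity a).toAffine.Equation 0 0 :=
  (fiberAtInfinity_equation_iff a 0 0).mpr (by ring)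

section IsElliptic

variable [(fiberAtInfinity a).IsElliptic]

theorem natCard_point_fiberAtInfinity [Finite F] :
    Nat.card (fiberAtInfinity a).toAffine.Point =
      Nat.card {p : F × F // p.2 ^ 2 = p.1 ^ 3 + 2 * a * p.1 ^ 2 + p.1} + 1 := by
  simp only [natCard_point, fiberAtInfinity_equation_iff]

theorem two_nsmul_mk_of_Y_eq_zero [DecidableEq F] {x : F}
    (h : (fiberAtInfinity a).toAffine.Equation x 0) :
    2 • Point.mk h = 0 := by
  rw [two_nsmul]
  exact Point.add_self_of_Y_eq (by rw [fiberAtInfinity_negY, neg_zero])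

theorem two_nsmul_mk_one_eq_mk_zero_zero [DecidableEq F] (h2 : (2 : F) ≠ 0) {s : F} (hs : s ≠ 0)
    (h : (fiberAtInfinity a).toAffine.Equation 1 s) :
    2 • Point.mk h = Point.mk fiberAtInfinity_equation_zero_zero := by
  have hs2 : s ^ 2 = 2 * (1 + a) := by
    linear_combination (fiberAtInfinity_equation_iff a 1 s).mp h
  have hy : s ≠ (fiberAtInfinity a).toAffine.negY 1 s := by
    rw [fiberAtInfinity_negY, ne_eq, eq_neg_iff_add_eq_zero, ← two_mul]
    exact mul_ne_zero h2 hs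
  have hslope : (fiberAtInfinity a).toAffine.slope 1 1 s s = s := by
    rw [slope_of_Y_ne rfl hy, div_eq_iff (sub_ne_zero.mpr hy), fiberAtInfinity_negY]
    simp only [fiberAtInfinity]
    linear_combination -2 * hs2
  have hX :
      (fiberAtInfinity a).toAffine.addX 1 1 ((fiberAtInfinity a).toAffine.slope 1 1 s s) = 0 := by
    rw [hslope]
    simp only [fiberAtInfinity, addX]
    linear_combination hs2
  rw [two_nsmul]
  refine (Point.add_self_of_Y_ne hy).trans ?_
  simp only [Point.mk, Point.some.injEq]
  refine ⟨hX, ?_⟩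
  rw [addY, negAddY, hX, hslope, fiberAtInfinity_negY]
  ring

theorem eight_dvd_natCard_point [Finite F] (h2 : (2 : F) ≠ 0) {c s : F}
    (hc : c ^ 2 = a ^ 2 - 1) (hs : s ^ 2 = 2 * (1 + a)) :
    8 ∣ Nat.card (fiberAtInfinity a).toAffine.Point := by
  classical
  have ha : a ^ 2 - 1 ≠ 0 := by
    have hΔ := (fiberAtInfinity a).isUnit_Δ
    rw [fiberAtInfinity_Δ] at hΔ
    exact right_ne_zero_of_mul hΔ.ne_zero
  have : Finite (fiberAtInfinity a).toAffine.Point := .of_equiv (Option _) (pointEquiv _).symm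
  have hs₀ : s ≠ 0 := by
    rintro rfl
    have h1a : 1 + a = 0 := (mul_eq_zero.mp (by linear_combination -hs)).resolve_left h2
    exact ha (by linear_combination (a - 1) * h1a)
  have hr : (c - a) ^ 2 + 2 * a * (c - a) + 1 = 0 := by linear_combination hc
  have hr₀ : c - a ≠ 0 := fun h => by simp [h] at hr
  have hPeq : (fiberAtInfinity a).toAffine.Equation 1 s :=
    (fiberAtInfinity_equation_iff a 1 s).mpr (by linear_combination hs)
  have hQeq : (fiberAtInfinity a).toAffine.Equation (c - a) 0 :=
    (fiberAtInfinity_equation_iff a (c - a) 0).mpr (by linear_combination -(c - a) * hr)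
  have hP2 := two_nsmul_mk_one_eq_mk_zero_zero h2 hs₀ hPeq
  have hP : addOrderOf (Point.mk hPeq) = 4 := by
    refine addOrderOf_eq_prime_pow (p := 2) (n := 1) ?_ ?_
    · rw [pow_one, hP2]
      exact Point.some_ne_zero _
    · rw [pow_two, mul_nsmul, hP2, two_nsmul_mk_of_Y_eq_zero]
  have hQ := two_nsmul_mk_of_Y_eq_zero hQeq
  refine eight_dvd_natCard_of_addOrderOf_eq_four hP hQ ?_
  refine notMem_zmultiples_of_addOrderOf_eq_four hP hQ (Point.some_ne_zero _) ?_
  rw [hP2]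
  simp [Point.mk, hr₀]

end IsElliptic

end Field

end VanGeemenTop

/-- Over a finite field `F` of odd characteristic, if `a² − 1` is a nonzero square in `F`
and `2(1+a)` is a square in `F`, then the number of affine points `(x, y) ∈ F × F` with
`y² = x³ + 2ax² + x` is congruent to `7` modulo `8` (equivalently, `8` divides the total
number of `F`-points of `E_∞`, including the point at infinity, since the group of
`F`-points contains a subgroup isomorphic to `ℤ/4 × ℤ/2`). -/
theorem vanGeemenTop_infinity_count_mod_eight {F : Type*} [Field F] [Fintype F]
    (hchar : ringChar F ≠ 2) (a : F)
    (hsq1 : ∃ c : F, c ≠ 0 ∧ c ^ 2 = a ^ 2 - 1)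
    (hsq2 : ∃ b : F, b ^ 2 = 2 * (1 + a)) :
    Nat.card {p : F × F // p.2 ^ 2 = p.1 ^ 3 + 2 * a * p.1 ^ 2 + p.1} % 8 = 7 := by
  obtain ⟨c, hc₀, hc⟩ := hsq1
  obtain ⟨s, hs⟩ := hsq2
  have h2 : (2 : F) ≠ 0 := Ring.two_ne_zero hchar
  have := VanGeemenTop.isElliptic_fiberAtInfinity h2 (hc ▸ pow_ne_zero 2 hc₀)
  have h8 := VanGeemenTop.eight_dvd_natCard_point h2 hc hs
  rw [VanGeemenTop.natCard_point_fiberAtInfinity] at h8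
  omega
end

section
/- Let p be an odd prime, let F be a field with exactly p² elements, and let a ∈ ℤ/pℤ. Regard ℤ/pℤ as a subfield of F via the canonical algebra map (F has characteristic p). If the polynomial X⁴ − 8X² + 8(1−a) (with coefficients taken in ℤ/pℤ and mapped into F) has a root in F, then 2(1+a) is a square in ℤ/pℤ or 2(1−a) is a square in ℤ/pℤ. -/
/-- Let `p` be an odd prime and `F` a field with exactly `p²` elements, with `ℤ/pℤ`
regarded as a subfield of `F` via the canonical (unique) ring homomorphism. If the
polynomial `X⁴ − 8X² + 8(1 − a)` (with `a ∈ ℤ/pℤ`) has a root in `F`, then `2(1+a)` is a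
square in `ℤ/pℤ` or `2(1−a)` is a square in `ℤ/pℤ`. -/
theorem root_in_quadratic_extension_implies_square (p : ℕ) (hp : p.Prime) (hodd : Odd p)
    {F : Type*} [Field F] [Fintype F] (hcard : Fintype.card F = p ^ 2)
    (f : ZMod p →+* F) (a : ZMod p)
    (hroot : ∃ x : F, x ^ 4 - 8 * x ^ 2 + 8 * (1 - f a) = 0) :
    (∃ b : ZMod p, b ^ 2 = 2 * (1 + a)) ∨ (∃ b : ZMod p, b ^ 2 = 2 * (1 - a)) := by
  classical
  haveI : Fact p.Prime := ⟨hp⟩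
  haveI : CharP F p := charP_of_injective_ringHom f.injective p
  obtain ⟨x, hx⟩ := hroot
  -- 2 is invertible in ZMod p
  have hpne2 : p ≠ 2 := by rintro rfl; simp [Nat.odd_iff] at hodd
  have h2 : (2 : ZMod p) ≠ 0 := by
    have : ((2 : ℕ) : ZMod p) ≠ 0 := by
      rw [Ne, ZMod.natCast_eq_zero_iff]
      exact fun h => hpne2 ((Nat.prime_dvd_prime_iff_eq hp Nat.prime_two).mp h)
    simpa using this
  -- fixed points of Frobenius lie in the image of f
  have hfix : ∀ z : F, z ^ p = z → ∃ c : ZMod p, f c = z := by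
    intro z hz
    by_contra hcon
    push_neg at hcon
    set P : Polynomial F := Polynomial.X ^ p - Polynomial.X with hP
    have hdeg : P.natDegree = p := by
      rw [hP, Polynomial.natDegree_sub_eq_left_of_natDegree_lt, Polynomial.natDegree_X_pow]
      rw [Polynomial.natDegree_X_pow, Polynomial.natDegree_X]
      exact hp.one_lt
    have hPne : P ≠ 0 := by
      intro h
      rw [h, Polynomial.natDegree_zero] at hdeg
      exact hp.pos.ne hdeg
    set S : Finset F := insert z (Finset.univ.image f) with hS
    have hzS : z ∉ Finset.univ.image f := by
      simp only [Finset.mem_image, Finset.mem_univ, true_and]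
      rintro ⟨c, hc⟩
      exact hcon c hc
    have hcardS : S.card = p + 1 := by
      rw [hS, Finset.card_insert_of_notMem hzS,
        Finset.card_image_of_injective _ f.injective, Finset.card_univ, ZMod.card]
    have hsub : S.val ⊆ P.roots := by
      intro u hu
      rw [Polynomial.mem_roots hPne]
      have hu' : u = z ∨ ∃ c : ZMod p, f c = u := by
        rcases Finset.mem_insert.mp hu with h | h
        · exact Or.inl h
        · simp only [Finset.mem_image, Finset.mem_univ, true_and] at h
          exact Or.inr h
      have : u ^ p = u := by
        rcases hu' with rfl | ⟨c, rfl⟩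
        · exact hz
        · rw [← map_pow, ZMod.pow_card]
      simp [hP, Polynomial.IsRoot, this]
    have := Polynomial.card_le_degree_of_subset_roots hsub
    rw [hcardS, hdeg] at this
    omega
  -- basic computations
  have hfa8 : f (8 * (1 + a)) = 8 + 8 * f a := by
    rw [map_mul, map_add, map_one, map_ofNat]; ring
  have hfa8' : f (8 * (1 - a)) = 8 - 8 * f a := by
    rw [map_mul, map_sub, map_one, map_ofNat]; ring
  set y : F := x ^ 2 - 4 with hy
  have h1 : y ^ 2 = f (8 * (1 + a)) := by rw [hfa8, hy]; linear_combination hx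
  have h2' : (y ^ p) ^ 2 = f (8 * (1 + a)) := by
    calc (y ^ p) ^ 2 = (y ^ 2) ^ p := by
          rw [← pow_mul, ← pow_mul, mul_comm]
    _ = f (8 * (1 + a)) := by rw [h1, ← map_pow, ZMod.pow_card]
  have h3 : (y ^ p - y) * (y ^ p + y) = 0 := by linear_combination h2' - h1
  rcases mul_eq_zero.mp h3 with h | h
  · -- y is fixed by Frobenius
    have hyp : y ^ p = y := sub_eq_zero.mp h
    obtain ⟨c, hc⟩ := hfix y hyp
    have hc2 : c ^ 2 = 8 * (1 + a) := by
      apply f.injective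
      rw [map_pow, hc, h1]
    left
    refine ⟨c / 2, ?_⟩
    field_simp
    linear_combination hc2
  · -- y^p = -y
    have hyp : y ^ p = -y := eq_neg_of_add_eq_zero_left h
    have hx2 : x ^ p ^ 2 = x := by rw [← hcard]; exact FiniteField.pow_card x
    have hw : (x ^ (p + 1)) ^ p = x ^ (p + 1) := by
      calc (x ^ (p + 1)) ^ p = x ^ (p ^ 2) * x ^ p := by
            rw [← pow_mul, ← pow_add]; congr 1; ring
      _ = x * x ^ p := by rw [hx2]
      _ = x ^ (p + 1) := by ring
    obtain ⟨c, hc⟩ := hfix _ hw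
    have h4p : (4 : F) ^ p = 4 := by
      rw [show (4 : F) = f 4 by rw [map_ofNat], ← map_pow, ZMod.pow_card]
    have hxp2 : (x ^ 2) ^ p = 8 - x ^ 2 := by
      have hxy : x ^ 2 = y + 4 := by rw [hy]; ring
      have h' : (x ^ 2) ^ p = y ^ p + 4 ^ p := by rw [hxy, add_pow_char]
      rw [h', hyp, h4p, hy]; ring
    have hw2 : (x ^ (p + 1)) ^ 2 = f (8 * (1 - a)) := by
      have e1 : (x ^ (p + 1)) ^ 2 = (x ^ 2) ^ p * x ^ 2 := by
        rw [← pow_mul, ← pow_mul, ← pow_add]; congr 1; ring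
      rw [e1, hxp2, hfa8']
      linear_combination -hx
    have hc2 : c ^ 2 = 8 * (1 - a) := by
      apply f.injective
      rw [map_pow, hc, hw2]
    right
    refine ⟨c / 2, ?_⟩
    field_simp
    linear_combination hc2
end

section
/- Let K be an algebraically closed field of characteristic 0. Let A be an invertible 3 × 3 matrix over K, let e ∈ K with e² = 1, and let B be an invertible 2 × 2 matrix over K. Assume that A is conjugate (similar over K) to the transpose of A⁻¹, and that A is conjugate to the block-diagonal 3 × 3 matrix with diagonal blocks the 1 × 1 matrix (e) and the 2 × 2 matrix B. If the trace of A is not equal to 1 and not equal to −1, then det B = 1. -/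
open Matrix

lemma conj_of_isConj {n : Type*} [Fintype n] [DecidableEq n] {K : Type*} [Field K]
    {A C : Matrix n n K} (h : IsConj A C) :
    ∃ u : (Matrix n n K)ˣ, (u : Matrix n n K) * A * (↑u⁻¹ : Matrix n n K) = C := by
  obtain ⟨u, hu⟩ := h
  exact ⟨u, by rw [hu.eq, Units.mul_inv_cancel_right]⟩

/-- Let `K` be an algebraically closed field of characteristic 0, `A` an invertible `3 × 3`
matrix similar to the transpose of its inverse and similar to the block-diagonal matrix
with blocks the `1 × 1` matrix `(e)` (where `e² = 1`) and an invertible `2 × 2` matrix `B`.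
If `tr(A) ≠ 1` and `tr(A) ≠ −1`, then `det B = 1`. -/
theorem det_block_eq_one_of_trace_ne_pm_one {K : Type*} [Field K] [IsAlgClosed K]
    [CharZero K] (A : Matrix (Fin 3) (Fin 3) K) (hA : IsUnit A)
    (e : K) (he : e ^ 2 = 1) (B : Matrix (Fin 2) (Fin 2) K) (hB : IsUnit B)
    (hsd : IsConj A (A⁻¹).transpose)
    (hblock : IsConj A !![e, 0, 0; 0, B 0 0, B 0 1; 0, B 1 0, B 1 1])
    (htr1 : Matrix.trace A ≠ 1) (htr2 : Matrix.trace A ≠ -1) :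
    B.det = 1 := by
  set C : Matrix (Fin 3) (Fin 3) K := !![e, 0, 0; 0, B 0 0, B 0 1; 0, B 1 0, B 1 1] with hCdef
  have he0 : e ≠ 0 := by intro h; rw [h] at he; simp at he
  have hdB0 : B.det ≠ 0 := by
    simpa [Matrix.isUnit_iff_isUnit_det, isUnit_iff_ne_zero] using hB
  have hdA0 : A.det ≠ 0 := by
    simpa [Matrix.isUnit_iff_isUnit_det, isUnit_iff_ne_zero] using hA
  obtain ⟨u, hCu⟩ := conj_of_isConj hblock
  obtain ⟨v, hDv⟩ := conj_of_isConj hsd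
  -- det and trace relations from the block conjugation
  have hdetAC : A.det = C.det := by rw [← hCu, Matrix.det_units_conj]
  have htrAC : A.trace = C.trace := by rw [← hCu, Matrix.trace_units_conj]
  have hdetC : C.det = e * B.det := by
    simp [hCdef, Matrix.det_fin_three, Matrix.det_fin_two]; ring
  have htrC : C.trace = e + B.trace := by
    simp [hCdef, Matrix.trace_fin_three, Matrix.trace_fin_two]; ring
  -- self-duality: trace and det of A equal those of A⁻¹
  have htrAinv : A.trace = (A⁻¹).trace := by
    rw [← Matrix.trace_transpose (A⁻¹), ← hDv, Matrix.trace_units_conj]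
  have hdetAinv : A.det = (A.det)⁻¹ := by
    have : ((A⁻¹).transpose).det = A.det := by rw [← hDv, Matrix.det_units_conj]
    rw [Matrix.det_transpose, Matrix.det_nonsing_inv, Ring.inverse_eq_inv] at this
    exact this.symm
  have hsq : A.det ^ 2 = 1 := by
    field_simp at hdetAinv
    linear_combination hdetAinv
  -- det B = ±1
  have hdBsq : B.det ^ 2 = 1 := by
    have : (e * B.det) ^ 2 = 1 := by rw [← hdetC, ← hdetAC]; exact hsq
    calc B.det ^ 2 = e ^ 2 * B.det ^ 2 := by rw [he, one_mul]
      _ = 1 := by rw [← this]; ring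
  have hdB : B.det = 1 ∨ B.det = -1 := by
    have : (B.det - 1) * (B.det + 1) = 0 := by linear_combination hdBsq
    rcases mul_eq_zero.mp this with h | h
    · exact Or.inl (sub_eq_zero.mp h)
    · exact Or.inr (eq_neg_of_add_eq_zero_left h)
  rcases hdB with h | h
  · exact h
  exfalso
  -- trace of A⁻¹ equals trace of C⁻¹
  have hCinv : C⁻¹ = (u : Matrix (Fin 3) (Fin 3) K) * A⁻¹ * (↑u⁻¹ : Matrix (Fin 3) (Fin 3) K) := by
    refine Matrix.inv_eq_left_inv ?_
    rw [← hCu]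
    calc (u : Matrix (Fin 3) (Fin 3) K) * A⁻¹ * ↑u⁻¹ * (↑u * A * ↑u⁻¹)
        = ↑u * (A⁻¹ * (↑u⁻¹ * (↑u * (A * ↑u⁻¹)))) := by simp only [mul_assoc]
      _ = ↑u * (A⁻¹ * (A * ↑u⁻¹)) := by rw [Units.inv_mul_cancel_left]
      _ = ↑u * ↑u⁻¹ := by rw [Matrix.nonsing_inv_mul_cancel_left _ _ (by simpa [isUnit_iff_ne_zero] using hdA0)]
      _ = 1 := u.mul_inv
  have htrAinvC : (A⁻¹).trace = C⁻¹.trace := by rw [hCinv, Matrix.trace_units_conj]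
  -- compute trace of C⁻¹
  have hCd0 : C.det ≠ 0 := by rw [hdetC]; exact mul_ne_zero he0 hdB0
  have htrCinv : C⁻¹.trace = (B.det + e * B.trace) / (e * B.det) := by
    rw [Matrix.inv_def, Ring.inverse_eq_inv, Matrix.trace_smul, Matrix.adjugate_fin_three]
    rw [hdetC]
    simp [hCdef, Matrix.trace_fin_three, Matrix.trace_fin_two, Matrix.det_fin_two, smul_eq_mul]
    field_simp
    ring
  -- now derive the contradiction: det B = -1 forces trace B = 0, so trace A = e = ±1
  have key : e + B.trace = (B.det + e * B.trace) / (e * B.det) := by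
    rw [← htrC, ← htrAC, htrAinv, htrAinvC, htrCinv]
  rw [h] at key
  have key2 : (e + B.trace) * (e * (-1)) = -1 + e * B.trace := by
    rw [eq_div_iff (by simpa using mul_ne_zero he0 (by norm_num : (-1 : K) ≠ 0))] at key
    linear_combination key
  have h2et : 2 * (e * B.trace) = 0 := by linear_combination (-1 : K) * key2 - he
  have htB : B.trace = 0 := by
    have het : e * B.trace = 0 := by
      have h2 : (2 : K) ≠ 0 := two_ne_zero
      rcases mul_eq_zero.mp h2et with h' | h'
      · exact absurd h' h2
      · exact h'
    rcases mul_eq_zero.mp het with h' | h'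
    · exact absurd h' he0
    · exact h'
  have htrA : A.trace = e := by rw [htrAC, htrC, htB, add_zero]
  have : e = 1 ∨ e = -1 := by
    have : (e - 1) * (e + 1) = 0 := by linear_combination he
    rcases mul_eq_zero.mp this with h | h
    · exact Or.inl (sub_eq_zero.mp h)
    · exact Or.inr (eq_neg_of_add_eq_zero_left h)
  rcases this with h1 | h1
  · exact htr1 (by rw [htrA, h1])
  · exact htr2 (by rw [htrA, h1])
end
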